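/- arXiv:2403.04613 — 2 statements merged into one kernel-verified Lean document; each statement's English description precedes it below -/
import Mathlib

section
/- Let (X, Y, A) ~ P_X × P_{Y|X} × Bernoulli(p_{A|X}) on 𝒳 × 𝒴 × {0,1}, so that A is conditionally independent of Y given X with P(A=1 | X=x) = p_{A|X}(x). Suppose B ⊆ 𝒳 is measurable with P(A=1, X∈B) > 0 and P(A=0, X∈B) > 0, and there exist t > 0 and ε ≥ 0 such that t ≤ p_{A|X}(x)/(1−p_{A|X}(x)) ≤ t(1+ε) for all x ∈ B. Let s : 𝒳 × 𝒴 → ℝ be measurable and S = s(X,Y). Then the total variation distance between the conditional law of S given {A=1, X∈B} and the conditional law of S given {A=0, X∈B} is at most ε; equivalently, |P(S∈D | A=1, X∈B) − P(S∈D | A=0, X∈B)| ≤ ε for every measurable D ⊆ ℝ. -/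
/-!
Conditional independence of `Y` and `A` given `X` shows that on `{A = b}` the joint law of
`(X, Y)` is the law of `(X, Y)` reweighted by `P(A = b | X)`, i.e. by `p(X)` or `1 - p(X)`:
the two finite measures agree on rectangles, hence everywhere. So both conditional laws are
normalisations of measures `ν₁, ν₀` which, by the odds bound, satisfy
`t ν₀ ≤ ν₁ ≤ t (1 + ε) ν₀` on `{X ∈ B}`, and two normalised measures whose ratio lies in
`[t, t (1 + ε)]` differ by at most `ε` on every set.
-/

open MeasureTheory ProbabilityTheory
open scoped Classical ENNReal

noncomputable section

def bernoulliProb (p : ℝ) (b : Bool) : ℝ := if b then p else 1 - p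

lemma bernoulliProb_mem_Icc {p : ℝ} (hp : 0 ≤ p ∧ p ≤ 1) (b : Bool) :
    bernoulliProb p b ∈ Set.Icc 0 1 := by
  cases b <;> simp only [bernoulliProb, Bool.false_eq_true, if_true, if_false, Set.mem_Icc] <;>
    constructor <;> linarith [hp.1, hp.2]

lemma Measurable.bernoulliProb {α : Type*} {_ : MeasurableSpace α} {f : α → ℝ} (hf : Measurable f)
    (b : Bool) : Measurable fun x => _root_.bernoulliProb (f x) b := by
  cases b
  · exact measurable_const.sub hf
  · exact hf

lemma mul_one_sub_le_and_le_of_div_one_sub_mem_Icc {p t c : ℝ} (ht : 0 < t)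
    (h : p / (1 - p) ∈ Set.Icc t c) : t * (1 - p) ≤ p ∧ p ≤ c * (1 - p) := by
  have hpos : 0 < 1 - p := by
    by_contra! hle
    have : p / (1 - p) ≤ 0 := div_nonpos_of_nonneg_of_nonpos (by linarith) hle
    linarith [h.1]
  exact ⟨(le_div_iff₀ hpos).1 h.1, (div_le_iff₀ hpos).1 h.2⟩

lemma abs_div_sub_div_le_of_ratio_bounds {a b c d t ε : ℝ} (ht : 0 < t) (hε : 0 ≤ ε)
    (hd : 0 < d) (hc : 0 ≤ c) (hcd : c ≤ d)
    (hac : t * c ≤ a ∧ a ≤ t * (1 + ε) * c) (hbd : t * d ≤ b ∧ b ≤ t * (1 + ε) * d) :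
    |a / b - c / d| ≤ ε := by
  have hb : 0 < b := lt_of_lt_of_le (mul_pos ht hd) hbd.1
  have hbd' : 0 < b * d := mul_pos hb hd
  rw [div_sub_div _ _ hb.ne' hd.ne', abs_div, abs_of_pos hbd', div_le_iff₀ hbd', abs_le]
  -- `a / b ≤ (1 + ε) c / d` and `a / b ≥ c / ((1 + ε) d)`, and `c / d ≤ 1`
  have hslack := mul_nonneg (mul_nonneg ht.le hε) (sub_nonneg.mpr hcd)
  constructor
  · nlinarith [mul_le_mul_of_nonneg_right hbd.2 hc, mul_le_mul_of_nonneg_right hac.1 hd.le]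
  · nlinarith [mul_le_mul_of_nonneg_right hac.2 hd.le, mul_le_mul_of_nonneg_right hbd.1 hc]

section Measures

variable {α : Type*} [MeasurableSpace α]

lemma abs_toReal_cond_sub_le {ν₀ ν₁ : Measure α} {C E : Set α} (hE : MeasurableSet E)
    {t ε : ℝ} (ht : 0 < t) (hε : 0 ≤ ε) (hC₀ : ν₀ C ≠ 0) (hC₀' : ν₀ C ≠ ∞)
    (hlow : ENNReal.ofReal t • ν₀.restrict C ≤ ν₁.restrict C)
    (hup : ν₁.restrict C ≤ ENNReal.ofReal (t * (1 + ε)) • ν₀.restrict C) :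
    |(ν₁[E | C]).toReal - (ν₀[E | C]).toReal| ≤ ε := by
  have hbounds : ∀ S, MeasurableSet S → t * ν₀.real (S ∩ C) ≤ ν₁.real (S ∩ C) ∧
      ν₁.real (S ∩ C) ≤ t * (1 + ε) * ν₀.real (S ∩ C) := by
    intro S hS
    have hfin : ν₀ (S ∩ C) ≠ ∞ := ne_top_of_le_ne_top hC₀' (measure_mono Set.inter_subset_right)
    have hlowS := hlow S
    have hupS := hup S
    simp only [Measure.smul_apply, Measure.restrict_apply hS, smul_eq_mul] at hlowS hupS
    have hfin₁ : ν₁ (S ∩ C) ≠ ∞ :=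
      ne_top_of_le_ne_top (ENNReal.mul_ne_top ENNReal.ofReal_ne_top hfin) hupS
    constructor
    · simpa [measureReal_def, ENNReal.toReal_mul, ht.le] using
        ENNReal.toReal_mono hfin₁ hlowS
    · have h1ε : (0 : ℝ) ≤ 1 + ε := by linarith
      simpa [measureReal_def, ENNReal.toReal_mul, ht.le, h1ε] using
        ENNReal.toReal_mono (ENNReal.mul_ne_top ENNReal.ofReal_ne_top hfin) hupS
  have hC := hbounds Set.univ MeasurableSet.univ
  have hCE := hbounds E hE
  rw [Set.univ_inter] at hC
  rw [cond_apply' hE, cond_apply' hE, ENNReal.toReal_mul, ENNReal.toReal_mul, ENNReal.toReal_inv,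
    ENNReal.toReal_inv, ← measureReal_def, ← measureReal_def, ← measureReal_def,
    ← measureReal_def, inv_mul_eq_div, inv_mul_eq_div, Set.inter_comm C E]
  exact abs_div_sub_div_le_of_ratio_bounds ht hε
    (ENNReal.toReal_pos hC₀ hC₀') measureReal_nonneg
    (measureReal_mono Set.inter_subset_right hC₀') hCE hC

variable {μ : Measure α} {f g : α → ℝ≥0∞} {C : Set α}

lemma restrict_withDensity_mono (hC : MeasurableSet C) (hfg : ∀ x ∈ C, f x ≤ g x) :
    (μ.withDensity f).restrict C ≤ (μ.withDensity g).restrict C := by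
  rw [restrict_withDensity hC, restrict_withDensity hC]
  exact withDensity_mono ((ae_restrict_iff' hC).2 (ae_of_all _ hfg))

lemma smul_restrict_withDensity_le (hf : Measurable f) (hC : MeasurableSet C) (c : ℝ≥0∞)
    (hfg : ∀ x ∈ C, c * f x ≤ g x) :
    c • (μ.withDensity f).restrict C ≤ (μ.withDensity g).restrict C := by
  rw [← Measure.restrict_smul, ← withDensity_smul c hf]
  exact restrict_withDensity_mono hC hfg

lemma restrict_withDensity_le_smul (hg : Measurable g) (hC : MeasurableSet C) (c : ℝ≥0∞)
    (hfg : ∀ x ∈ C, f x ≤ c * g x) :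
    (μ.withDensity f).restrict C ≤ c • (μ.withDensity g).restrict C := by
  rw [← Measure.restrict_smul, ← withDensity_smul c hg]
  exact restrict_withDensity_mono hC hfg

end Measures

section Transfer

variable {Ω β : Type*} [MeasurableSpace Ω] [MeasurableSpace β] {μ ν : Measure Ω} {Z : Ω → β}
  {T : Set Ω}

lemma measure_preimage_inter_eq_of_map_restrict_eq (hZ : Measurable Z)
    (hμν : (μ.restrict T).map Z = ν.map Z) {W : Set β} (hW : MeasurableSet W) :
    μ (Z ⁻¹' W ∩ T) = ν (Z ⁻¹' W) := by
  rw [← Measure.restrict_apply (hZ hW), ← Measure.map_apply hZ hW, hμν, Measure.map_apply hZ hW]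

lemma cond_preimage_eq_of_map_restrict_eq (hZ : Measurable Z)
    (hμν : (μ.restrict T).map Z = ν.map Z) {W W' : Set β} (hW : MeasurableSet W)
    (hW' : MeasurableSet W') :
    μ[Z ⁻¹' W' | Z ⁻¹' W ∩ T] = ν[Z ⁻¹' W' | Z ⁻¹' W] := by
  have hinter : Z ⁻¹' W ∩ T ∩ Z ⁻¹' W' = Z ⁻¹' (W ∩ W') ∩ T := by
    rw [Set.preimage_inter, Set.inter_right_comm]
  rw [cond_apply' (hZ hW'), cond_apply' (hZ hW'), hinter,
    measure_preimage_inter_eq_of_map_restrict_eq hZ hμν hW,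
    measure_preimage_inter_eq_of_map_restrict_eq hZ hμν (hW.inter hW'), Set.preimage_inter]

end Transfer

section CondExp

variable {Ω : Type*} {m mΩ : MeasurableSpace Ω} {μ : Measure Ω}

lemma condExp_indicator_preimage_singleton_eq_bernoulliProb [IsFiniteMeasure μ] (hm : m ≤ mΩ) {A : Ω → Bool}
    (hA : Measurable A) {g : Ω → ℝ} (hg : μ[fun ω => if A ω then (1 : ℝ) else 0 | m] =ᵐ[μ] g)
    (b : Bool) : μ⟦A ⁻¹' {b} | m⟧ =ᵐ[μ] fun ω => bernoulliProb (g ω) b := by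
  have hind : (A ⁻¹' {true}).indicator (fun _ => (1 : ℝ)) = fun ω => if A ω then 1 else 0 := by
    funext ω; by_cases h : A ω <;> simp [h]
  cases b
  · have hcompl : (A ⁻¹' {false}).indicator (fun _ => (1 : ℝ))
        = (fun _ => (1 : ℝ)) - fun ω => if A ω then 1 else 0 := by
      funext ω; by_cases h : A ω <;> simp [h]
    have hint : Integrable (fun ω => if A ω then (1 : ℝ) else 0) μ := by
      rw [← hind]
      exact (integrable_const 1).indicator (hA (measurableSet_singleton true))
    rw [hcompl]
    filter_upwards [condExp_sub (integrable_const 1) hint m, hg] with ω hsub hω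
    rw [hsub, Pi.sub_apply, condExp_const hm, hω]
    rfl
  · rw [hind]
    exact hg

lemma measureReal_inter_inter_eq_setIntegral [IsFiniteMeasure μ] (hm : m ≤ mΩ)
    {S T U : Set Ω} (hS : MeasurableSet S) (hT : MeasurableSet T) (hU : MeasurableSet[m] U)
    {g : Ω → ℝ} (hg : StronglyMeasurable[m] g) (hgi : Integrable g μ)
    (hST : μ⟦S ∩ T | m⟧ =ᵐ[μ] fun ω => (μ⟦S | m⟧) ω * g ω) :
    μ.real (U ∩ S ∩ T) = ∫ ω in U ∩ S, g ω ∂μ := by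
  have hSg : S.indicator (fun _ => (1 : ℝ)) * g = S.indicator g := by
    funext ω; by_cases h : ω ∈ S <;> simp [h]
  have hpull := condExp_mul_of_stronglyMeasurable_right (m := m) hg
    (hSg ▸ hgi.indicator hS) ((integrable_const (1 : ℝ)).indicator hS)
  calc μ.real (U ∩ S ∩ T)
      = ∫ ω in U, (S ∩ T).indicator (fun _ => (1 : ℝ)) ω ∂μ := by
        rw [setIntegral_indicator (hS.inter hT), setIntegral_const, smul_eq_mul, mul_one,
          Set.inter_assoc]
    _ = ∫ ω in U, (μ⟦S | m⟧) ω * g ω ∂μ := by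
        rw [← setIntegral_condExp hm ((integrable_const _).indicator (hS.inter hT)) hU]
        exact setIntegral_congr_ae (hm U hU) (hST.mono fun ω h _ => h)
    _ = ∫ ω in U, S.indicator g ω ∂μ := by
        rw [← setIntegral_condExp hm (hgi.indicator hS) hU, ← hSg]
        exact setIntegral_congr_ae (hm U hU) (hpull.mono fun ω h _ => h.symm)
    _ = ∫ ω in U ∩ S, g ω ∂μ := by
        rw [setIntegral_indicator hS]

end CondExp

section JointLaw

variable {Ω 𝒳 𝒴 : Type*} [MeasurableSpace Ω] [StandardBorelSpace Ω] [MeasurableSpace 𝒳]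
  [MeasurableSpace 𝒴] {μ : Measure Ω} [IsFiniteMeasure μ] {X : Ω → 𝒳} {Y : Ω → 𝒴} {A : Ω → Bool}
  {p : 𝒳 → ℝ}

theorem map_restrict_preimage_eq_map_withDensity (hX : Measurable X) (hY : Measurable Y)
    (hA : Measurable A) (hp : Measurable p) (hp01 : ∀ x, 0 ≤ p x ∧ p x ≤ 1)
    (hCI : CondIndepFun (MeasurableSpace.comap X inferInstance) hX.comap_le Y A μ)
    (hprop : μ[fun ω => if A ω then (1 : ℝ) else 0
        | MeasurableSpace.comap X inferInstance] =ᵐ[μ] fun ω => p (X ω))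
    (b : Bool) :
    (μ.restrict (A ⁻¹' {b})).map (fun ω => (X ω, Y ω))
      = (μ.withDensity fun ω => ENNReal.ofReal (bernoulliProb (p (X ω)) b)).map
          (fun ω => (X ω, Y ω)) := by
  have hZ : Measurable fun ω => (X ω, Y ω) := hX.prodMk hY
  have hq_mem : ∀ ω, bernoulliProb (p (X ω)) b ∈ Set.Icc 0 1 :=
    fun ω => bernoulliProb_mem_Icc (hp01 (X ω)) b
  have hq_int : Integrable (fun ω => bernoulliProb (p (X ω)) b) μ :=
    Integrable.of_bound ((hp.comp hX).bernoulliProb b).aestronglyMeasurable 1 <|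
      ae_of_all _ fun ω => by
        rw [Real.norm_eq_abs, abs_le]
        exact ⟨by linarith [(hq_mem ω).1], (hq_mem ω).2⟩
  have hq_comap : StronglyMeasurable[MeasurableSpace.comap X inferInstance]
      fun ω => bernoulliProb (p (X ω)) b :=
    ((hp.comp (comap_measurable X)).bernoulliProb b).stronglyMeasurable
  refine Measure.ext_prod fun {U V} hU hV => ?_
  have hUV : MeasurableSet (X ⁻¹' U ∩ Y ⁻¹' V) := (hX hU).inter (hY hV)
  have hYA : μ⟦Y ⁻¹' V ∩ A ⁻¹' {b} | MeasurableSpace.comap X inferInstance⟧ =ᵐ[μ]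
      fun ω => (μ⟦Y ⁻¹' V | MeasurableSpace.comap X inferInstance⟧) ω
        * bernoulliProb (p (X ω)) b := by
    filter_upwards [(condIndepFun_iff_condExp_inter_preimage_eq_mul hY hA).1 hCI V {b} hV
        (measurableSet_singleton b),
      condExp_indicator_preimage_singleton_eq_bernoulliProb hX.comap_le hA hprop b] with ω hmul hb
    rw [hmul, hb]
  rw [Measure.map_apply hZ (hU.prod hV), Measure.map_apply hZ (hU.prod hV), Set.mk_preimage_prod,
    Measure.restrict_apply hUV, withDensity_apply _ hUV,
    ← ofReal_integral_eq_lintegral_ofReal hq_int.integrableOn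
      (ae_of_all _ fun ω => (hq_mem ω).1),
    ← measureReal_inter_inter_eq_setIntegral hX.comap_le (hY hV) (hA (measurableSet_singleton b))
      ⟨U, hU, rfl⟩ hq_comap hq_int hYA, ofReal_measureReal]

end JointLaw

theorem propensity_balancing_TV_general
    {Ω 𝒳 : Type*} [MeasurableSpace Ω] [StandardBorelSpace Ω] [MeasurableSpace 𝒳]
    (μ : Measure Ω) [IsProbabilityMeasure μ]
    (X : Ω → 𝒳) (Y : Ω → ℝ) (A : Ω → Bool)
    (hX : Measurable X) (hY : Measurable Y) (hA : Measurable A)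
    (p : 𝒳 → ℝ) (hp : Measurable p) (hp01 : ∀ x, 0 ≤ p x ∧ p x ≤ 1)
    -- `A ⟂ Y | X`
    (hCI : CondIndepFun (MeasurableSpace.comap X inferInstance) hX.comap_le Y A μ)
    -- `p` is the propensity score: `P(A = 1 | X) = p(X)`
    (hprop : μ[fun ω => if A ω then (1 : ℝ) else 0
        | MeasurableSpace.comap X inferInstance] =ᵐ[μ] fun ω => p (X ω))
    (B : Set 𝒳) (hB : MeasurableSet B)
    (t : ℝ) (ht : 0 < t) (ε : ℝ) (hε : 0 ≤ ε)
    -- bounded odds of the propensity score on `B`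
    (hodds : ∀ x ∈ B, t ≤ p x / (1 - p x) ∧ p x / (1 - p x) ≤ t * (1 + ε))
    -- `P(A = 0, X ∈ B) > 0`
    (h0 : μ {ω | A ω = false ∧ X ω ∈ B} ≠ 0)
    (s : 𝒳 → ℝ → ℝ) (hs : Measurable (Function.uncurry s)) :
    ∀ D : Set ℝ, MeasurableSet D →
      |(μ[|{ω | A ω = true ∧ X ω ∈ B}] {ω | s (X ω) (Y ω) ∈ D}).toReal
        - (μ[|{ω | A ω = false ∧ X ω ∈ B}] {ω | s (X ω) (Y ω) ∈ D}).toReal| ≤ ε := by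
  intro D hD
  set Z : Ω → 𝒳 × ℝ := fun ω => (X ω, Y ω)
  set ν : Bool → Measure Ω := fun b =>
    μ.withDensity fun ω => ENNReal.ofReal (bernoulliProb (p (X ω)) b)
  have hZ : Measurable Z := hX.prodMk hY
  have hB' : MeasurableSet (Prod.fst ⁻¹' B : Set (𝒳 × ℝ)) := measurable_fst hB
  have hlaw := map_restrict_preimage_eq_map_withDensity hX hY hA hp hp01 hCI hprop
  have hevent : ∀ b, {ω | A ω = b ∧ X ω ∈ B} = Z ⁻¹' (Prod.fst ⁻¹' B) ∩ A ⁻¹' {b} :=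
    fun b => Set.ext fun ω => and_comm
  have hcond : ∀ b, μ[|{ω | A ω = b ∧ X ω ∈ B}] {ω | s (X ω) (Y ω) ∈ D}
      = (ν b)[Z ⁻¹' (Function.uncurry s ⁻¹' D) | X ⁻¹' B] := fun b => by
    rw [hevent]; exact cond_preimage_eq_of_map_restrict_eq hZ (hlaw b) hB' (hs hD)
  have hdens₀ : Measurable fun ω => ENNReal.ofReal (bernoulliProb (p (X ω)) false) :=
    ENNReal.measurable_ofReal.comp ((hp.comp hX).bernoulliProb false)
  have hodds' : ∀ ω ∈ X ⁻¹' B,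
      t * (1 - p (X ω)) ≤ p (X ω) ∧ p (X ω) ≤ t * (1 + ε) * (1 - p (X ω)) :=
    fun ω hω => mul_one_sub_le_and_le_of_div_one_sub_mem_Icc ht (hodds _ hω)
  have hν₀ : ν false (X ⁻¹' B) = μ {ω | A ω = false ∧ X ω ∈ B} := by
    rw [hevent, measure_preimage_inter_eq_of_map_restrict_eq hZ (hlaw false) hB']
    rfl
  rw [hcond, hcond]
  refine abs_toReal_cond_sub_le (hZ (hs hD)) ht hε (hν₀ ▸ h0) (hν₀ ▸ measure_ne_top μ _) ?_ ?_
  · refine smul_restrict_withDensity_le hdens₀ (hX hB) _ fun ω hω => ?_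
    rw [← ENNReal.ofReal_mul ht.le]
    exact ENNReal.ofReal_le_ofReal (hodds' ω hω).1
  · refine restrict_withDensity_le_smul hdens₀ (hX hB) _ fun ω hω => ?_
    rw [← ENNReal.ofReal_mul (by positivity)]
    exact ENNReal.ofReal_le_ofReal (hodds' ω hω).2

/-- **Lemma A.1 (bounded propensity score implies closeness of conditional score
distributions for observed and missing data).**
Let `(X, Y, A) ~ P_X × P_{Y|X} × Bernoulli(p_{A|X})`, i.e. `Y ⟂ A | X` and
`P(A = 1 | X) = p(X)`. If on a measurable set `B ⊆ 𝒳` the odds of the propensity score satisfy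
`t ≤ p(x)/(1 − p(x)) ≤ t(1 + ε)` for all `x ∈ B`, then for `S = s(X, Y)`,
`|P(S ∈ D | A = 1, X ∈ B) − P(S ∈ D | A = 0, X ∈ B)| ≤ ε` for every measurable `D ⊆ ℝ`,
i.e. `d_TV(P_{S | A=1, X∈B}, P_{S | A=0, X∈B}) ≤ ε`. -/
theorem propensity_balancing_TV
    {Ω 𝒳 : Type*} [MeasurableSpace Ω] [StandardBorelSpace Ω] [MeasurableSpace 𝒳]
    (μ : Measure Ω) [IsProbabilityMeasure μ]
    (X : Ω → 𝒳) (Y : Ω → ℝ) (A : Ω → Bool)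
    (hX : Measurable X) (hY : Measurable Y) (hA : Measurable A)
    (p : 𝒳 → ℝ) (hp : Measurable p) (hp01 : ∀ x, 0 ≤ p x ∧ p x ≤ 1)
    -- `A ⟂ Y | X`
    (hCI : CondIndepFun (MeasurableSpace.comap X inferInstance) hX.comap_le Y A μ)
    -- `p` is the propensity score: `P(A = 1 | X) = p(X)`
    (hprop : μ[fun ω => if A ω then (1 : ℝ) else 0
        | MeasurableSpace.comap X inferInstance] =ᵐ[μ] fun ω => p (X ω))
    (B : Set 𝒳) (hB : MeasurableSet B)
    (t : ℝ) (ht : 0 < t) (ε : ℝ) (hε : 0 ≤ ε)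
    -- bounded odds of the propensity score on `B`
    (hodds : ∀ x ∈ B, t ≤ p x / (1 - p x) ∧ p x / (1 - p x) ≤ t * (1 + ε))
    -- `P(A = 1, X ∈ B) > 0` and `P(A = 0, X ∈ B) > 0`
    (h1 : μ {ω | A ω = true ∧ X ω ∈ B} ≠ 0)
    (h0 : μ {ω | A ω = false ∧ X ω ∈ B} ≠ 0)
    (s : 𝒳 → ℝ → ℝ) (hs : Measurable (Function.uncurry s)) :
    ∀ D : Set ℝ, MeasurableSet D →
      |(μ[|{ω | A ω = true ∧ X ω ∈ B}] {ω | s (X ω) (Y ω) ∈ D}).toReal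
        - (μ[|{ω | A ω = false ∧ X ω ∈ B}] {ω | s (X ω) (Y ω) ∈ D}).toReal| ≤ ε :=
  propensity_balancing_TV_general μ X Y A hX hY hA p hp hp01 hCI hprop B hB t ht ε hε hodds h0 s hs
end
end

section
/- Let (X, Y, A) ~ P_X × P_{Y|X} × Bernoulli(p_{A|X}) with 0 < p_{A|X}(x) < 1 for all x, let p̂_{A|X} : 𝒳 → (0,1) be any measurable function, and let δ = e^{2‖log f_{p,p̂}‖_∞} − 1 where f_{p,p̂}(x) = [p_{A|X}(x)/(1−p_{A|X}(x))]/[p̂_{A|X}(x)/(1−p̂_{A|X}(x))]. Fix ε > 0, k ∈ ℤ, and let D_k = {x : p̂_{A|X}(x)/(1−p̂_{A|X}(x)) ∈ [(1+ε)^k, (1+ε)^{k+1})}. If P(A=1, X∈D_k) > 0 and P(A=0, X∈D_k) > 0, then for S = s(X,Y) with any measurable s : 𝒳 × 𝒴 → ℝ, the total variation distance between the conditional law of S given {A=1, X∈D_k} and the conditional law of S given {A=0, X∈D_k} is at most ε + δ + εδ. -/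
/-
Given `X`, the treatment `A` is conditionally independent not only of `Y` but of everything
measurable w.r.t. `σ(X) ⊔ σ(Y)`, in particular of the score event `T = {s(X, Y) ∈ D}`. Hence
`P(A = 1, X ∈ D_k, T) = E[1_{D_k}(X) P(T | X) p(X)]`, and the same with `1 - p(X)` for `A = 0`.
On `D_k` the true odds `p/(1 - p)` lie within a factor `e^{±c}` of the estimated odds, which lie
in `[(1+ε)^k, (1+ε)^{k+1})`; so they lie in `[L, L K]` with `K = (1 + ε) e^{2c}`. Integrating,
both the joint probabilities with `T` and the group masses of `A = 1` and `A = 0` have ratios in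
`[L, L K]`, so the two conditional probabilities of `T` are within a factor `K` of each other.
Two numbers in `[0, 1]` within a factor `K ≥ 1` differ by at most `K - 1 = ε + δ + ε δ`.
-/

open MeasureTheory ProbabilityTheory
open scoped Classical ENNReal

noncomputable section

/-- Propensity score `ε`-discretization bin: `D_k = {x : p̂(x)/(1 − p̂(x)) ∈ [(1+ε)^k, (1+ε)^{k+1})}`. -/
def binSet {𝒳 : Type*} (phat : 𝒳 → ℝ) (ε : ℝ) (k : ℤ) : Set 𝒳 :=
  {x | (1 + ε) ^ k ≤ phat x / (1 - phat x) ∧ phat x / (1 - phat x) < (1 + ε) ^ (k + 1)}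

section CondExpOfSets

-- `mΩ` is bound after `m`, `m₁`, `m₂` so that instance search picks it as the ambient σ-algebra.
variable {Ω : Type*} {m m₁ m₂ : MeasurableSpace Ω} [mΩ : MeasurableSpace Ω] {μ : Measure Ω}
  [IsFiniteMeasure μ]

lemma condExp_inter_of_measurableSet_left {C S : Set Ω} (hC : MeasurableSet[m] C)
    (hS : MeasurableSet S) : μ⟦C ∩ S | m⟧ =ᵐ[μ] C.indicator (μ⟦S | m⟧) := by
  rw [← Set.indicator_indicator]
  exact condExp_indicator ((integrable_const 1).indicator hS) hC

lemma condExp_compl (hm : m ≤ mΩ) {S : Set Ω} (hS : MeasurableSet S) :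
    μ⟦Sᶜ | m⟧ =ᵐ[μ] 1 - μ⟦S | m⟧ := by
  rw [Set.indicator_compl]
  have hsub := condExp_sub (m := m) (integrable_const (μ := μ) (1 : ℝ))
    ((integrable_const 1).indicator hS)
  rwa [condExp_const hm] at hsub

lemma measureReal_inter_eq_setIntegral_condExp (hm : m ≤ mΩ) {B S : Set Ω}
    (hB : MeasurableSet[m] B) (hS : MeasurableSet S) :
    μ.real (S ∩ B) = ∫ ω in B, (μ⟦S | m⟧) ω ∂μ := by
  rw [setIntegral_condExp hm ((integrable_const 1).indicator hS) hB, setIntegral_indicator hS,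
    setIntegral_const, smul_eq_mul, mul_one, Set.inter_comm]

lemma measureReal_inter_le_of_condExp_le (hm : m ≤ mΩ) {B S S' : Set Ω}
    (hB : MeasurableSet[m] B) (hS : MeasurableSet S) (hS' : MeasurableSet S') {a b : ℝ}
    (h : ∀ᵐ ω ∂μ, ω ∈ B → a * (μ⟦S | m⟧) ω ≤ b * (μ⟦S' | m⟧) ω) :
    a * μ.real (S ∩ B) ≤ b * μ.real (S' ∩ B) := by
  rw [measureReal_inter_eq_setIntegral_condExp hm hB hS,
    measureReal_inter_eq_setIntegral_condExp hm hB hS', ← integral_const_mul,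
    ← integral_const_mul]
  exact setIntegral_mono_ae_restrict (integrable_condExp.const_mul a).integrableOn
    (integrable_condExp.const_mul b).integrableOn ((ae_restrict_iff' (hm B hB)).mpr h)

variable [StandardBorelSpace Ω]

lemma CondIndep.sup_conditioning_left (hm : m ≤ mΩ) (hm₁ : m₁ ≤ mΩ) (hm₂ : m₂ ≤ mΩ)
    (h : CondIndep m m₁ m₂ hm μ) : CondIndep m (m ⊔ m₁) m₂ hm μ := by
  set rects : Set (Set Ω) :=
    {t | ∃ C E, MeasurableSet[m] C ∧ MeasurableSet[m₁] E ∧ t = C ∩ E}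
  have hgen : m ⊔ m₁ = MeasurableSpace.generateFrom rects := by
    refine le_antisymm (sup_le ?_ ?_) (MeasurableSpace.generateFrom_le ?_)
    · exact fun C hC => MeasurableSpace.measurableSet_generateFrom
        ⟨C, Set.univ, hC, MeasurableSet.univ, (Set.inter_univ C).symm⟩
    · exact fun E hE => MeasurableSpace.measurableSet_generateFrom
        ⟨Set.univ, E, MeasurableSet.univ, hE, (Set.univ_inter E).symm⟩
    · rintro t ⟨C, E, hC, hE, rfl⟩
      exact (le_sup_left (a := m) _ hC).inter (le_sup_right (a := m) _ hE)
  have hrects : IsPiSystem rects := by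
    rintro _ ⟨C₁, E₁, hC₁, hE₁, rfl⟩ _ ⟨C₂, E₂, hC₂, hE₂, rfl⟩ -
    exact ⟨C₁ ∩ C₂, E₁ ∩ E₂, hC₁.inter hC₂, hE₁.inter hE₂, Set.inter_inter_inter_comm ..⟩
  refine CondIndepSets.condIndep (sup_le hm hm₁) hm₂ hrects
    (@MeasurableSpace.isPiSystem_measurableSet Ω m₂) hgen
    (@MeasurableSpace.generateFrom_measurableSet Ω m₂).symm ?_
  rw [condIndepSets_iff m hm rects {s | MeasurableSet[m₂] s}
    (by rintro _ ⟨C, E, hC, hE, rfl⟩; exact (hm _ hC).inter (hm₁ _ hE)) (fun t ht => hm₂ _ ht)]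
  rintro _ t ⟨C, E, hC, hE, rfl⟩ (ht : MeasurableSet[m₂] t)
  have hEt := (condIndep_iff m m₁ m₂ hm hm₁ hm₂ μ).mp h E t hE ht
  calc μ⟦C ∩ E ∩ t | m⟧ =ᵐ[μ] C.indicator (μ⟦E ∩ t | m⟧) := by
        rw [Set.inter_assoc]
        exact condExp_inter_of_measurableSet_left hC ((hm₁ _ hE).inter (hm₂ _ ht))
    _ =ᵐ[μ] C.indicator (μ⟦E | m⟧ * μ⟦t | m⟧) := by
        filter_upwards [hEt] with ω hω
        simp only [Set.indicator_apply, hω]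
    _ = C.indicator (μ⟦E | m⟧) * μ⟦t | m⟧ := by
        ext ω
        by_cases hω : ω ∈ C <;> simp [hω]
    _ =ᵐ[μ] μ⟦C ∩ E | m⟧ * μ⟦t | m⟧ := by
        filter_upwards [condExp_inter_of_measurableSet_left (μ := μ) hC (hm₁ _ hE)]
          with ω hω
        simp only [Pi.mul_apply, hω]

lemma CondIndep.measureReal_inter_le (hm : m ≤ mΩ) (hm₁ : m₁ ≤ mΩ) (hm₂ : m₂ ≤ mΩ)
    (h : CondIndep m m₁ m₂ hm μ) {B S S' T : Set Ω} (hB : MeasurableSet[m] B)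
    (hS : MeasurableSet[m₂] S) (hS' : MeasurableSet[m₂] S') (hT : MeasurableSet[m ⊔ m₁] T)
    {a b : ℝ} (hab : ∀ᵐ ω ∂μ, ω ∈ B → a * (μ⟦S | m⟧) ω ≤ b * (μ⟦S' | m⟧) ω) :
    a * μ.real (S ∩ B ∩ T) ≤ b * μ.real (S' ∩ B ∩ T) := by
  have hprod := (condIndep_iff m (m ⊔ m₁) m₂ hm (sup_le hm hm₁) hm₂ μ).mp
    (CondIndep.sup_conditioning_left hm hm₁ hm₂ h) T
  have hT' : MeasurableSet T := sup_le hm hm₁ T hT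
  have hsets : ∀ U : Set Ω, U ∩ B ∩ T = T ∩ U ∩ B := fun U => by
    rw [Set.inter_right_comm, Set.inter_comm U T]
  rw [hsets S, hsets S']
  refine measureReal_inter_le_of_condExp_le (μ := μ) hm hB (hT'.inter (hm₂ S hS))
    (hT'.inter (hm₂ S' hS')) ?_
  have hT_nonneg : 0 ≤ᵐ[μ] μ⟦T | m⟧ := condExp_nonneg (.of_forall (Set.indicator_nonneg
    fun _ _ => zero_le_one))
  filter_upwards [hab, hprod S hT hS, hprod S' hT hS', hT_nonneg] with ω hω hTS hTS' hTω hωB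
  rw [hTS, hTS', Pi.mul_apply, Pi.mul_apply, mul_left_comm, mul_left_comm b]
  exact mul_le_mul_of_nonneg_left (hω hωB) hTω

lemma CondIndep.measureReal_inter_odds_bounds (hm : m ≤ mΩ) (hm₁ : m₁ ≤ mΩ) (hm₂ : m₂ ≤ mΩ)
    (h : CondIndep m m₁ m₂ hm μ) {B S T : Set Ω} (hB : MeasurableSet[m] B)
    (hS : MeasurableSet[m₂] S) (hT : MeasurableSet[m ⊔ m₁] T) {π : Ω → ℝ}
    (hπ : μ⟦S | m⟧ =ᵐ[μ] π) {L R : ℝ}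
    (hodds : ∀ ω ∈ B, L * (1 - π ω) ≤ π ω ∧ π ω ≤ R * (1 - π ω)) :
    L * μ.real (Sᶜ ∩ B ∩ T) ≤ μ.real (S ∩ B ∩ T) ∧
      μ.real (S ∩ B ∩ T) ≤ R * μ.real (Sᶜ ∩ B ∩ T) := by
  have hπc : μ⟦Sᶜ | m⟧ =ᵐ[μ] fun ω => 1 - π ω := by
    filter_upwards [condExp_compl hm (hm₂ S hS), hπ] with ω hc hs
    rw [hc, Pi.sub_apply, Pi.one_apply, hs]
  constructor
  · simpa only [compl_compl, one_mul] using
      CondIndep.measureReal_inter_le hm hm₁ hm₂ h hB hS.compl hS.compl.compl hT (a := L) (b := 1)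
        (by filter_upwards [hπ, hπc] with ω hs hc hω; simpa [hs, hc] using (hodds ω hω).1)
  · simpa only [one_mul] using
      CondIndep.measureReal_inter_le hm hm₁ hm₂ h hB hS hS.compl hT (a := 1) (b := R)
        (by filter_upwards [hπ, hπc] with ω hs hc hω; simpa [hs, hc] using (hodds ω hω).2)

end CondExpOfSets

lemma cond_real_le_mul_cond_real {Ω : Type*} [MeasurableSpace Ω] {μ : Measure Ω}
    [IsFiniteMeasure μ] {E F : Set Ω} (hE : MeasurableSet E) (hF : MeasurableSet F)
    (hE0 : μ E ≠ 0) (hF0 : μ F ≠ 0) (T : Set Ω) {a b K : ℝ} (ha : 0 < a)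
    (hnum : a * μ.real (E ∩ T) ≤ b * μ.real (F ∩ T)) (hden : b * μ.real F ≤ K * a * μ.real E) :
    μ[|E].real T ≤ K * μ[|F].real T := by
  have hEpos : 0 < μ.real E := ENNReal.toReal_pos hE0 (measure_ne_top μ E)
  have hFpos : 0 < μ.real F := ENNReal.toReal_pos hF0 (measure_ne_top μ F)
  simp only [measureReal_def, cond_apply hE, cond_apply hF, ENNReal.toReal_mul,
    ENNReal.toReal_inv]
  simp only [← measureReal_def]
  rw [inv_mul_eq_div, inv_mul_eq_div, mul_div_assoc', div_le_div_iff₀ hEpos hFpos]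
  have hFT : 0 ≤ μ.real (F ∩ T) := measureReal_nonneg
  refine le_of_mul_le_mul_left ?_ ha
  nlinarith [mul_le_mul_of_nonneg_right hnum hFpos.le, mul_le_mul_of_nonneg_right hden hFT]

lemma abs_sub_le_sub_one_of_le_mul {x y K : ℝ} (hx : x ≤ 1) (hy : y ≤ 1) (hK : 1 ≤ K)
    (hxy : x ≤ K * y) (hyx : y ≤ K * x) : |x - y| ≤ K - 1 := by
  rw [abs_sub_le_iff]
  constructor <;> nlinarith

lemma abs_cond_real_sub_le_of_ratio_bounds {Ω : Type*} [MeasurableSpace Ω] {μ : Measure Ω}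
    [IsFiniteMeasure μ] {E F : Set Ω} (hE : MeasurableSet E) (hF : MeasurableSet F)
    (hE0 : μ E ≠ 0) (hF0 : μ F ≠ 0) (T : Set Ω) {L K : ℝ} (hL : 0 < L) (hK : 1 ≤ K)
    (hjoint : L * μ.real (F ∩ T) ≤ μ.real (E ∩ T) ∧ μ.real (E ∩ T) ≤ L * K * μ.real (F ∩ T))
    (hmass : L * μ.real F ≤ μ.real E ∧ μ.real E ≤ L * K * μ.real F) :
    |μ[|E].real T - μ[|F].real T| ≤ K - 1 := by
  refine abs_sub_le_sub_one_of_le_mul measureReal_le_one measureReal_le_one hK ?_ ?_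
  · refine cond_real_le_mul_cond_real hE hF hE0 hF0 T one_pos (by rw [one_mul]; exact hjoint.2) ?_
    nlinarith [hmass.1]
  · exact cond_real_le_mul_cond_real hF hE hF0 hE0 T hL (by rw [one_mul]; exact hjoint.1)
      (by rw [one_mul, mul_comm K L]; exact hmass.2)

lemma le_and_le_of_abs_log_div_le {r s c : ℝ} (hr : 0 < r) (hs : 0 < s)
    (h : |Real.log (r / s)| ≤ c) : Real.exp (-c) * s ≤ r ∧ r ≤ Real.exp c * s := by
  have hrs : 0 < r / s := div_pos hr hs
  obtain ⟨hlow, hup⟩ := abs_le.mp h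
  constructor
  · rw [← le_div_iff₀ hs, ← Real.exp_log hrs]
    exact Real.exp_le_exp.mpr hlow
  · rw [← div_le_iff₀ hs, ← Real.exp_log hrs]
    exact Real.exp_le_exp.mpr hup

lemma measurableSet_binSet {𝒳 : Type*} [MeasurableSpace 𝒳] {phat : 𝒳 → ℝ}
    (hphat : Measurable phat) (ε : ℝ) (k : ℤ) : MeasurableSet (binSet phat ε k) := by
  have hodds : Measurable fun x => phat x / (1 - phat x) :=
    hphat.div (measurable_const.sub hphat)
  exact (measurableSet_le measurable_const hodds).inter (measurableSet_lt hodds measurable_const)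

lemma mul_one_sub_le_and_le_of_mem_binSet {𝒳 : Type*} {p phat : 𝒳 → ℝ} {c ε : ℝ} {k : ℤ}
    {x : 𝒳} (hx : x ∈ binSet phat ε k) (hε : 0 < ε) (hp : 0 < p x ∧ p x < 1)
    (hphat : 0 < phat x ∧ phat x < 1)
    (hc : |Real.log ((p x / (1 - p x)) / (phat x / (1 - phat x)))| ≤ c) :
    Real.exp (-c) * (1 + ε) ^ k * (1 - p x) ≤ p x ∧
      p x ≤ Real.exp (-c) * (1 + ε) ^ k * ((1 + ε) * Real.exp (2 * c)) * (1 - p x) := by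
  have hq : 0 < 1 - p x := by linarith
  have hqhat : 0 < 1 - phat x := by linarith
  have hε' : 0 < 1 + ε := by linarith
  obtain ⟨hlow, hup⟩ :=
    le_and_le_of_abs_log_div_le (div_pos hp.1 hq) (div_pos hphat.1 hqhat) hc
  have hR : Real.exp (-c) * (1 + ε) ^ k * ((1 + ε) * Real.exp (2 * c))
      = Real.exp c * (1 + ε) ^ (k + 1) := by
    rw [zpow_add_one₀ hε'.ne', show Real.exp c = Real.exp (-c) * Real.exp (2 * c) by
      rw [← Real.exp_add]; ring_nf]
    ring
  rw [← le_div_iff₀ hq, ← div_le_iff₀ hq, hR]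
  constructor
  · calc Real.exp (-c) * (1 + ε) ^ k
        ≤ Real.exp (-c) * (phat x / (1 - phat x)) := by gcongr; exact hx.1
      _ ≤ p x / (1 - p x) := hlow
  · calc p x / (1 - p x) ≤ Real.exp c * (phat x / (1 - phat x)) := hup
      _ ≤ Real.exp c * (1 + ε) ^ (k + 1) := by gcongr; exact hx.2.le

theorem propensity_balancing_TV_estimated_general
    {Ω 𝒳 : Type*} [MeasurableSpace Ω] [StandardBorelSpace Ω] [MeasurableSpace 𝒳]
    (μ : Measure Ω) [IsProbabilityMeasure μ]
    (X : Ω → 𝒳) (Y : Ω → ℝ) (A : Ω → Bool)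
    (hX : Measurable X) (hY : Measurable Y) (hA : Measurable A)
    (p : 𝒳 → ℝ) (hp01 : ∀ x, 0 < p x ∧ p x < 1)
    (phat : 𝒳 → ℝ) (hphat : Measurable phat) (hphat01 : ∀ x, 0 < phat x ∧ phat x < 1)
    -- `A ⟂ Y | X`
    (hCI : CondIndepFun (MeasurableSpace.comap X inferInstance) hX.comap_le Y A μ)
    -- `p` is the propensity score: `P(A = 1 | X) = p(X)`
    (hprop : μ[fun ω => if A ω then (1 : ℝ) else 0
        | MeasurableSpace.comap X inferInstance] =ᵐ[μ] fun ω => p (X ω))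
    -- `c` is a uniform bound on `|log f_{p,p̂}|`, and `δ = e^{2c} − 1`
    (c : ℝ)
    (hc : ∀ x, |Real.log ((p x / (1 - p x)) / (phat x / (1 - phat x)))| ≤ c)
    (δ : ℝ) (hδ : δ = Real.exp (2 * c) - 1)
    (ε : ℝ) (hε : 0 < ε) (k : ℤ)
    -- `P(A = 1, X ∈ D_k) > 0` and `P(A = 0, X ∈ D_k) > 0`
    (h1 : μ {ω | A ω = true ∧ X ω ∈ binSet phat ε k} ≠ 0)
    (h0 : μ {ω | A ω = false ∧ X ω ∈ binSet phat ε k} ≠ 0)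
    (s : 𝒳 → ℝ → ℝ) (hs : Measurable (Function.uncurry s)) :
    ∀ D : Set ℝ, MeasurableSet D →
      |(μ[|{ω | A ω = true ∧ X ω ∈ binSet phat ε k}] {ω | s (X ω) (Y ω) ∈ D}).toReal
        - (μ[|{ω | A ω = false ∧ X ω ∈ binSet phat ε k}] {ω | s (X ω) (Y ω) ∈ D}).toReal|
        ≤ ε + δ + ε * δ := by
  intro D hD
  set L := Real.exp (-c) * (1 + ε) ^ k
  set K := (1 + ε) * Real.exp (2 * c)
  set B := X ⁻¹' binSet phat ε k
  set S := {ω | A ω = true}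
  set T := {ω | s (X ω) (Y ω) ∈ D}
  have hB : MeasurableSet[MeasurableSpace.comap X inferInstance] B :=
    ⟨_, measurableSet_binSet hphat ε k, rfl⟩
  have hS : MeasurableSet[MeasurableSpace.comap A inferInstance] S :=
    ⟨{true}, measurableSet_singleton _, rfl⟩
  have hT : MeasurableSet[MeasurableSpace.comap X inferInstance ⊔
      MeasurableSpace.comap Y inferInstance] T := by
    rw [← MeasurableSpace.comap_prodMk]
    exact ⟨_, hs hD, rfl⟩
  have hπ : μ⟦S | MeasurableSpace.comap X inferInstance⟧ =ᵐ[μ] fun ω => p (X ω) := by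
    convert hprop using 2
    ext ω
    by_cases hω : A ω <;> simp [S, hω]
  have hodds : ∀ ω ∈ B, L * (1 - p (X ω)) ≤ p (X ω) ∧ p (X ω) ≤ L * K * (1 - p (X ω)) :=
    fun ω hω => mul_one_sub_le_and_le_of_mem_binSet hω hε (hp01 _) (hphat01 _) (hc _)
  have hindep := (condIndepFun_iff_condIndep _ _ _ _ _).mp hCI
  have hjoint := CondIndep.measureReal_inter_odds_bounds hX.comap_le hY.comap_le
    hA.comap_le hindep hB hS hT hπ hodds
  have hmass := CondIndep.measureReal_inter_odds_bounds hX.comap_le hY.comap_le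
    hA.comap_le hindep hB hS MeasurableSet.univ hπ hodds
  simp only [Set.inter_univ] at hmass
  have hE0 : {ω | A ω = false ∧ X ω ∈ binSet phat ε k} = Sᶜ ∩ B := by ext ω; simp [S, B]
  change μ (S ∩ B) ≠ 0 at h1
  rw [hE0] at h0 ⊢
  have hc0 : 0 ≤ c := by
    obtain ⟨ω, -⟩ := nonempty_of_measure_ne_zero h1
    exact (abs_nonneg _).trans (hc (X ω))
  have hK : 1 ≤ K := one_le_mul_of_one_le_of_one_le (by linarith) (Real.one_le_exp (by linarith))
  have hL : 0 < L := mul_pos (Real.exp_pos _) (zpow_pos (by linarith) k)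
  rw [show ε + δ + ε * δ = K - 1 by rw [hδ]; ring]
  exact abs_cond_real_sub_le_of_ratio_bounds ((hA.comap_le _ hS).inter (hX.comap_le _ hB))
    ((hA.comap_le _ hS).compl.inter (hX.comap_le _ hB)) h1 h0 T hL hK hjoint hmass

/-- **Closeness of conditional score distributions within a bin built from an estimated
propensity score.**
Let `(X, Y, A) ~ P_X × P_{Y|X} × Bernoulli(p_{A|X})` with `0 < p(x) < 1`, let
`p̂ : 𝒳 → (0,1)` be measurable, and let `δ = e^{2‖log f_{p,p̂}‖_∞} − 1` for the odds ratio
`f_{p,p̂}`. Fix `ε > 0`, `k ∈ ℤ`, and the bin `D_k` built from `p̂`. If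
`P(A=1, X∈D_k) > 0` and `P(A=0, X∈D_k) > 0`, then for `S = s(X,Y)`,
`|P(S ∈ D | A=1, X∈D_k) − P(S ∈ D | A=0, X∈D_k)| ≤ ε + δ + εδ` for every measurable `D`,
i.e. the total variation distance is at most `ε + δ + εδ`. -/
theorem propensity_balancing_TV_estimated
    {Ω 𝒳 : Type*} [MeasurableSpace Ω] [StandardBorelSpace Ω] [MeasurableSpace 𝒳]
    (μ : Measure Ω) [IsProbabilityMeasure μ]
    (X : Ω → 𝒳) (Y : Ω → ℝ) (A : Ω → Bool)
    (hX : Measurable X) (hY : Measurable Y) (hA : Measurable A)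
    (p : 𝒳 → ℝ) (hp : Measurable p) (hp01 : ∀ x, 0 < p x ∧ p x < 1)
    (phat : 𝒳 → ℝ) (hphat : Measurable phat) (hphat01 : ∀ x, 0 < phat x ∧ phat x < 1)
    -- `A ⟂ Y | X`
    (hCI : CondIndepFun (MeasurableSpace.comap X inferInstance) hX.comap_le Y A μ)
    -- `p` is the propensity score: `P(A = 1 | X) = p(X)`
    (hprop : μ[fun ω => if A ω then (1 : ℝ) else 0
        | MeasurableSpace.comap X inferInstance] =ᵐ[μ] fun ω => p (X ω))
    -- `c` is a uniform bound on `|log f_{p,p̂}|`, and `δ = e^{2c} − 1`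
    (c : ℝ)
    (hc : ∀ x, |Real.log ((p x / (1 - p x)) / (phat x / (1 - phat x)))| ≤ c)
    (δ : ℝ) (hδ : δ = Real.exp (2 * c) - 1)
    (ε : ℝ) (hε : 0 < ε) (k : ℤ)
    -- `P(A = 1, X ∈ D_k) > 0` and `P(A = 0, X ∈ D_k) > 0`
    (h1 : μ {ω | A ω = true ∧ X ω ∈ binSet phat ε k} ≠ 0)
    (h0 : μ {ω | A ω = false ∧ X ω ∈ binSet phat ε k} ≠ 0)
    (s : 𝒳 → ℝ → ℝ) (hs : Measurable (Function.uncurry s)) :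
    ∀ D : Set ℝ, MeasurableSet D →
      |(μ[|{ω | A ω = true ∧ X ω ∈ binSet phat ε k}] {ω | s (X ω) (Y ω) ∈ D}).toReal
        - (μ[|{ω | A ω = false ∧ X ω ∈ binSet phat ε k}] {ω | s (X ω) (Y ω) ∈ D}).toReal|
        ≤ ε + δ + ε * δ :=
  propensity_balancing_TV_estimated_general μ X Y A hX hY hA p hp01 phat hphat hphat01 hCI hprop c
    hc δ hδ ε hε k h1 h0 s hs
end
end
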